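/- arXiv:0812.5023 — 2 statements merged into one kernel-verified Lean document; each statement's English description precedes it below -/
import Mathlib

section
/- Assume Q is hermitian. Let I' be a subset of I and Q' = (Q_{ij})_{i,j∈I'} the corresponding submatrix. Then the canonical k-algebra homomorphism H_n(Q') → H_n(Q), sending each generator 1_ν, x_{a,ν}, τ_{i,ν} (ν ∈ (I')^n) to the generator of the same name, is injective; moreover, for all ν, ν' ∈ (I')^n it restricts to a bijection 1_ν H_n(Q') 1_{ν'} → 1_ν H_n(Q) 1_{ν'}. -/
open scoped BigOperators

namespace Rouq

variable {k : Type} [CommRing k] {I : Type} {n : ℕ}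

/-- Generators of the algebra `H_n(Q)`: idempotents `1_ν`, polynomial generators
`x_{a,ν}` and intertwiners `τ_{i,ν}` (in 0-based indexing). -/
inductive Gen (I : Type) (n : ℕ) : Type
  | unit (ν : Fin n → I) : Gen I n
  | x (a : Fin n) (ν : Fin n → I) : Gen I n
  | tau (i : ℕ) (h : i + 1 < n) (ν : Fin n → I) : Gen I n

/-- The free (unital) algebra on the generators. -/
abbrev FA (k : Type) [CommRing k] (I : Type) (n : ℕ) := FreeAlgebra k (Gen I n)

def E (k : Type) [CommRing k] (ν : Fin n → I) : FA k I n :=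
  FreeAlgebra.ι k (Gen.unit ν)

def Xg (k : Type) [CommRing k] (a : Fin n) (ν : Fin n → I) : FA k I n :=
  FreeAlgebra.ι k (Gen.x a ν)

def Tg (k : Type) [CommRing k] (i : ℕ) (h : i + 1 < n) (ν : Fin n → I) : FA k I n :=
  FreeAlgebra.ι k (Gen.tau i h ν)

/-- `x_{a,ν}` with a natural-number index (junk value `0` when out of range). -/
def Xn (k : Type) [CommRing k] (a : ℕ) (ν : Fin n → I) : FA k I n :=
  if h : a < n then Xg k ⟨a, h⟩ ν else 0

/-- `τ_{i,ν}` with a natural-number index (junk value `0` when out of range). -/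
def Tn (k : Type) [CommRing k] (i : ℕ) (ν : Fin n → I) : FA k I n :=
  if h : i + 1 < n then Tg k i h ν else 0

/-- The action of the transposition `s_i = (i, i+1)` on sequences `ν ∈ I^n`. -/
def swapSeq (i : ℕ) (ν : Fin n → I) : Fin n → I :=
  if h : i + 1 < n then ν ∘ (Equiv.swap (⟨i, by omega⟩ : Fin n) ⟨i + 1, h⟩) else ν

/-- Evaluation of a polynomial `Q ∈ k[u,v]` at the pair `(a, b)`, localized at
the idempotent `u` (the constant term contributes a multiple of `u`). -/
noncomputable def pev (Q : MvPolynomial (Fin 2) k) (a b u : FA k I n) : FA k I n :=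
  ∑ m ∈ Q.support, Q.coeff m • (a ^ m 0 * b ^ m 1 * u)

/-- Evaluation of the divided difference
`(Q(xhi, xmid) - Q(xlo, xmid))/(xhi - xlo)`, localized at the idempotent `u`. -/
noncomputable def pevDiff (Q : MvPolynomial (Fin 2) k) (xlo xmid xhi u : FA k I n) :
    FA k I n :=
  ∑ m ∈ Q.support, Q.coeff m •
    ((∑ t ∈ Finset.range (m 0), xhi ^ t * xlo ^ (m 0 - 1 - t)) * xmid ^ m 1 * u)

/-- The defining relations of `H_n(Q)`. -/
inductive Rel (Q : I → I → MvPolynomial (Fin 2) k) : FA k I n → FA k I n → Prop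
  | unit_mul_self (ν : Fin n → I) :
      Rel Q (E k ν * E k ν) (E k ν)
  | unit_mul_ne (ν ν' : Fin n → I) (h : ν ≠ ν') :
      Rel Q (E k ν * E k ν') 0
  | tau_sandwich (i : ℕ) (h : i + 1 < n) (ν : Fin n → I) :
      Rel Q (Tg k i h ν) (E k (swapSeq i ν) * Tg k i h ν * E k ν)
  | x_sandwich (a : Fin n) (ν : Fin n → I) :
      Rel Q (Xg k a ν) (E k ν * Xg k a ν * E k ν)
  | x_comm (a b : Fin n) (ν : Fin n → I) :
      Rel Q (Xg k a ν * Xg k b ν) (Xg k b ν * Xg k a ν)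
  | tau_sq (i : ℕ) (h : i + 1 < n) (ν : Fin n → I) :
      Rel Q (Tg k i h (swapSeq i ν) * Tg k i h ν)
        (pev (Q (ν ⟨i, by omega⟩) (ν ⟨i + 1, h⟩)) (Xn k i ν) (Xn k (i + 1) ν) (E k ν))
  | tau_far (i j : ℕ) (hi : i + 1 < n) (hj : j + 1 < n) (hij : i + 2 ≤ j) (ν : Fin n → I) :
      Rel Q (Tg k i hi (swapSeq j ν) * Tg k j hj ν)
        (Tg k j hj (swapSeq i ν) * Tg k i hi ν)
  | braid_eq (i : ℕ) (h : i + 2 < n) (ν : Fin n → I)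
      (hv : ν ⟨i, by omega⟩ = ν ⟨i + 2, h⟩) :
      Rel Q
        (Tg k (i + 1) (by omega) (swapSeq i (swapSeq (i + 1) ν)) *
            Tg k i (by omega) (swapSeq (i + 1) ν) * Tg k (i + 1) (by omega) ν)
        (Tg k i (by omega) (swapSeq (i + 1) (swapSeq i ν)) *
            Tg k (i + 1) (by omega) (swapSeq i ν) * Tg k i (by omega) ν +
          pevDiff (Q (ν ⟨i, by omega⟩) (ν ⟨i + 1, by omega⟩))
            (Xn k i ν) (Xn k (i + 1) ν) (Xn k (i + 2) ν) (E k ν))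
  | braid_ne (i : ℕ) (h : i + 2 < n) (ν : Fin n → I)
      (hv : ν ⟨i, by omega⟩ ≠ ν ⟨i + 2, h⟩) :
      Rel Q
        (Tg k (i + 1) (by omega) (swapSeq i (swapSeq (i + 1) ν)) *
            Tg k i (by omega) (swapSeq (i + 1) ν) * Tg k (i + 1) (by omega) ν)
        (Tg k i (by omega) (swapSeq (i + 1) (swapSeq i ν)) *
            Tg k (i + 1) (by omega) (swapSeq i ν) * Tg k i (by omega) ν)
  | tau_x_i (i : ℕ) (h : i + 1 < n) (ν : Fin n → I)
      (hv : ν ⟨i, by omega⟩ = ν ⟨i + 1, h⟩) :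
      Rel Q (Tg k i h ν * Xn k i ν)
        (Xn k (i + 1) (swapSeq i ν) * Tg k i h ν - E k ν)
  | tau_x_i1 (i : ℕ) (h : i + 1 < n) (ν : Fin n → I)
      (hv : ν ⟨i, by omega⟩ = ν ⟨i + 1, h⟩) :
      Rel Q (Tg k i h ν * Xn k (i + 1) ν)
        (Xn k i (swapSeq i ν) * Tg k i h ν + E k ν)
  | tau_x_other (i : ℕ) (h : i + 1 < n) (a : Fin n) (ν : Fin n → I)
      (hv : (a.val ≠ i ∧ a.val ≠ i + 1) ∨ ν ⟨i, by omega⟩ ≠ ν ⟨i + 1, h⟩) :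
      Rel Q (Tg k i h ν * Xg k a ν)
        (Xg k (Equiv.swap (⟨i, by omega⟩ : Fin n) ⟨i + 1, h⟩ a) (swapSeq i ν) * Tg k i h ν)

/-- The algebra `H_n(Q)`, as a quotient of the free algebra by the defining
relations. -/
abbrev HQ (k : Type) [CommRing k] (I : Type) (n : ℕ)
    (Q : I → I → MvPolynomial (Fin 2) k) :=
  RingQuot (Rel (k := k) (I := I) (n := n) Q)

/-- The quotient map. -/
noncomputable def mk (Q : I → I → MvPolynomial (Fin 2) k) : FA k I n →ₐ[k] HQ k I n Q :=
  RingQuot.mkAlgHom k (Rel Q)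

/-- `Q` is hermitian: `Q_{ij}(u,v) = Q_{ji}(v,u)`. -/
def Hermitian (Q : I → I → MvPolynomial (Fin 2) k) : Prop :=
  ∀ i j, Q i j = MvPolynomial.rename (Equiv.swap (0 : Fin 2) 1) (Q j i)

/-- The (possibly non-unital) algebra `H_n(Q)` proper: the non-unital subalgebra
of the presented algebra generated by the generators. -/
noncomputable def Hgen (Q : I → I → MvPolynomial (Fin 2) k) :
    NonUnitalSubalgebra k (HQ k I n Q) :=
  NonUnitalAlgebra.adjoin k (Set.range fun g : Gen I n => mk Q (FreeAlgebra.ι k g))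

/-- The permutation of `Fin n` given by a word in the Coxeter generators. -/
def permOfWord (n : ℕ) (l : List ℕ) : Equiv.Perm (Fin n) :=
  (l.map fun i =>
    if h : i + 1 < n then Equiv.swap (⟨i, by omega⟩ : Fin n) ⟨i + 1, h⟩ else 1).prod

/-- `l` is a reduced word for the permutation `w`. -/
def IsReducedWordFor (n : ℕ) (l : List ℕ) (w : Equiv.Perm (Fin n)) : Prop :=
  (∀ i ∈ l, i + 1 < n) ∧ permOfWord n l = w ∧
    ∀ l' : List ℕ, (∀ i ∈ l', i + 1 < n) → permOfWord n l' = w → l.length ≤ l'.length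

/-- Action of a word of simple transpositions on a sequence. -/
def seqActWord : List ℕ → (Fin n → I) → (Fin n → I)
  | [], ν => ν
  | i :: l, ν => swapSeq i (seqActWord l ν)

/-- `τ_{i_1, s_{i_2}⋯s_{i_r}(ν)} ⋯ τ_{i_{r-1}, s_{i_r}(ν)} τ_{i_r, ν}` for a word
`l = [i_1, …, i_r]`; the empty word gives the idempotent `1_ν`. -/
noncomputable def tauWord (k : Type) [CommRing k] : List ℕ → (Fin n → I) → FA k I n
  | [], ν => E k ν
  | i :: l, ν => Tn k i (seqActWord l ν) * tauWord k l ν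

/-- The standard reduced word for the longest element of `S_m` (0-based). -/
def longWord (m : ℕ) : List ℕ :=
  (List.range m).foldr (fun j acc => (List.range j).reverse ++ acc) []

end Rouq

/-!
Every defining relation involves only sequences from a single `S_n`-orbit, and `I'^n` is a union
of orbits. So sending the generators indexed by sequences in `I'^n` to their namesakes in
`H_n(Q')` and all other generators to `0` respects the relations; the resulting map `restrict`
is a left inverse of `f`.

For the bijection on `1_ν H_n(Q) 1_ν'`: in a noncommutative ring `Ideal.span` is a left ideal,
and the one spanned by the `1_μ` with `μ ∈ I'^n` is two-sided because each generator carries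
`1_μ` on its right to an idempotent of the same orbit. Hence `1_ν a 1_μ = 0` for `ν ∈ I'^n`,
`μ ∉ I'^n`. Therefore `1_ν a (x - f (restrict x)) = 0` for all `a`: on a generator outside
`I'^n` the idempotent on its left kills it, and the property passes to sums and products.
-/

namespace Rouq

variable {k : Type} [CommRing k] {I J : Type} {n : ℕ}

@[simp] lemma swapSeq_comp (f : I → J) (i : ℕ) (ν : Fin n → I) :
    swapSeq i (fun b => f (ν b)) = fun b => f (swapSeq i ν b) := by
  unfold swapSeq
  split <;> rfl

lemma range_swapSeq (i : ℕ) (ν : Fin n → I) : Set.range (swapSeq i ν) = Set.range ν := by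
  unfold swapSeq
  split
  · exact (Equiv.surjective _).range_comp ν
  · rfl

variable (k) in
open Classical in
noncomputable def restrictGen (Q : I → I → MvPolynomial (Fin 2) k) (I' : Set I) :
    Gen I n → HQ k I' n (fun i j => Q i j)
  | .unit ν => if h : ∀ b, ν b ∈ I' then mk _ (E k fun b => ⟨ν b, h b⟩) else 0
  | .x a ν => if h : ∀ b, ν b ∈ I' then mk _ (Xg k a fun b => ⟨ν b, h b⟩) else 0
  | .tau i hi ν => if h : ∀ b, ν b ∈ I' then mk _ (Tg k i hi fun b => ⟨ν b, h b⟩) else 0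

noncomputable def restrictFree (Q : I → I → MvPolynomial (Fin 2) k) (I' : Set I) :
    FA k I n →ₐ[k] HQ k I' n (fun i j => Q i j) :=
  FreeAlgebra.lift k (restrictGen k Q I')

section restrictFree

variable (Q : I → I → MvPolynomial (Fin 2) k) {I' : Set I}

lemma mk_rel {p q : FA k I n} (h : Rel Q p q) : mk Q p = mk Q q :=
  RingQuot.mkAlgHom_rel k h

@[simp] lemma restrictFree_E_val (ν : Fin n → I') :
    restrictFree Q I' (E k fun b => (ν b : I)) = mk _ (E k ν) := by
  simp [restrictFree, restrictGen, E]

@[simp] lemma restrictFree_Xg_val (a : Fin n) (ν : Fin n → I') :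
    restrictFree Q I' (Xg k a fun b => (ν b : I)) = mk _ (Xg k a ν) := by
  simp [restrictFree, restrictGen, Xg]

@[simp] lemma restrictFree_Tg_val (i : ℕ) (hi : i + 1 < n) (ν : Fin n → I') :
    restrictFree Q I' (Tg k i hi fun b => (ν b : I)) = mk _ (Tg k i hi ν) := by
  simp [restrictFree, restrictGen, Tg]

@[simp] lemma restrictFree_Xn_val (a : ℕ) (ν : Fin n → I') :
    restrictFree Q I' (Xn k a fun b => (ν b : I)) = mk _ (Xn k a ν) := by
  unfold Xn
  split <;> simp

lemma restrictFree_E_of_not_mem {ν : Fin n → I} (h : ¬ ∀ b, ν b ∈ I') :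
    restrictFree Q I' (E k ν) = 0 := by
  simp [restrictFree, restrictGen, E, h]

lemma restrictFree_Xg_of_not_mem (a : Fin n) {ν : Fin n → I} (h : ¬ ∀ b, ν b ∈ I') :
    restrictFree Q I' (Xg k a ν) = 0 := by
  simp [restrictFree, restrictGen, Xg, h]

lemma restrictFree_Tg_of_not_mem (i : ℕ) (hi : i + 1 < n) {ν : Fin n → I}
    (h : ¬ ∀ b, ν b ∈ I') : restrictFree Q I' (Tg k i hi ν) = 0 := by
  simp [restrictFree, restrictGen, Tg, h]

lemma restrictFree_rel ⦃p q : FA k I n⦄ (h : Rel Q p q) :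
    restrictFree Q I' p = restrictFree Q I' q := by
  induction h with
  | unit_mul_self ν =>
    by_cases hν : ∀ b, ν b ∈ I'
    · lift ν to Fin n → I' using hν
      simpa using mk_rel _ (Rel.unit_mul_self ν)
    · simp [restrictFree_E_of_not_mem Q hν]
  | unit_mul_ne ν ν' hne =>
    by_cases hν : ∀ b, ν b ∈ I'
    · by_cases hν' : ∀ b, ν' b ∈ I'
      · lift ν to Fin n → I' using hν
        lift ν' to Fin n → I' using hν'
        simpa using mk_rel _ (Rel.unit_mul_ne ν ν' fun h => hne (h ▸ rfl))
      · simp [restrictFree_E_of_not_mem Q hν']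
    · simp [restrictFree_E_of_not_mem Q hν]
  | tau_sandwich i hi ν =>
    by_cases hν : ∀ b, ν b ∈ I'
    · lift ν to Fin n → I' using hν
      simpa using mk_rel _ (Rel.tau_sandwich i hi ν)
    · simp [restrictFree_E_of_not_mem Q hν, restrictFree_Tg_of_not_mem Q _ _ hν]
  | x_sandwich a ν =>
    by_cases hν : ∀ b, ν b ∈ I'
    · lift ν to Fin n → I' using hν
      simpa using mk_rel _ (Rel.x_sandwich a ν)
    · simp [restrictFree_E_of_not_mem Q hν, restrictFree_Xg_of_not_mem Q _ hν]
  | x_comm a b ν =>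
    by_cases hν : ∀ b, ν b ∈ I'
    · lift ν to Fin n → I' using hν
      simpa using mk_rel _ (Rel.x_comm a b ν)
    · simp [restrictFree_Xg_of_not_mem Q _ hν]
  | tau_sq i hi ν =>
    by_cases hν : ∀ b, ν b ∈ I'
    · lift ν to Fin n → I' using hν
      simpa [pev] using mk_rel _ (Rel.tau_sq i hi ν)
    · simp [pev, restrictFree_E_of_not_mem Q hν, restrictFree_Tg_of_not_mem Q _ _ hν]
  | tau_far i j hi hj hij ν =>
    by_cases hν : ∀ b, ν b ∈ I'
    · lift ν to Fin n → I' using hν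
      simpa using mk_rel _ (Rel.tau_far i j hi hj hij ν)
    · simp [restrictFree_Tg_of_not_mem Q _ _ hν]
  | braid_eq i h ν hv =>
    by_cases hν : ∀ b, ν b ∈ I'
    · lift ν to Fin n → I' using hν
      simpa [pevDiff] using mk_rel _ (Rel.braid_eq i h ν (Subtype.ext hv))
    · simp [pevDiff, restrictFree_E_of_not_mem Q hν, restrictFree_Tg_of_not_mem Q _ _ hν]
  | braid_ne i h ν hv =>
    by_cases hν : ∀ b, ν b ∈ I'
    · lift ν to Fin n → I' using hν
      simpa using mk_rel _ (Rel.braid_ne i h ν fun h => hv (congrArg _ h))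
    · simp [restrictFree_Tg_of_not_mem Q _ _ hν]
  | tau_x_i i hi ν hv =>
    by_cases hν : ∀ b, ν b ∈ I'
    · lift ν to Fin n → I' using hν
      simpa using mk_rel _ (Rel.tau_x_i i hi ν (Subtype.ext hv))
    · simp [restrictFree_E_of_not_mem Q hν, restrictFree_Tg_of_not_mem Q _ _ hν]
  | tau_x_i1 i hi ν hv =>
    by_cases hν : ∀ b, ν b ∈ I'
    · lift ν to Fin n → I' using hν
      simpa using mk_rel _ (Rel.tau_x_i1 i hi ν (Subtype.ext hv))
    · simp [restrictFree_E_of_not_mem Q hν, restrictFree_Tg_of_not_mem Q _ _ hν]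
  | tau_x_other i hi a ν hv =>
    by_cases hν : ∀ b, ν b ∈ I'
    · lift ν to Fin n → I' using hν
      simpa using
        mk_rel _ (Rel.tau_x_other i hi a ν (hv.imp id fun h h' => h (congrArg _ h')))
    · simp [restrictFree_Tg_of_not_mem Q _ _ hν]

end restrictFree

noncomputable def restrict (Q : I → I → MvPolynomial (Fin 2) k) (I' : Set I) :
    HQ k I n Q →ₐ[k] HQ k I' n (fun i j => Q i j) :=
  RingQuot.liftAlgHom k ⟨restrictFree Q I', restrictFree_rel Q⟩

namespace Gen

def map (f : I → J) : Gen I n → Gen J n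
  | unit ν => unit (f ∘ ν)
  | x a ν => x a (f ∘ ν)
  | tau i h ν => tau i h (f ∘ ν)

def source : Gen I n → Fin n → I
  | unit ν | x _ ν | tau _ _ ν => ν

def target : Gen I n → Fin n → I
  | unit ν | x _ ν => ν
  | tau i _ ν => swapSeq i ν

lemma forall_target_mem_iff (g : Gen I n) (s : Set I) :
    (∀ b, g.target b ∈ s) ↔ ∀ b, g.source b ∈ s := by
  cases g with
  | tau i h ν => simp only [target, source, ← Set.range_subset_iff, range_swapSeq]
  | _ => rfl

lemma exists_map_val {s : Set I} (g : Gen I n) (hg : ∀ b, g.source b ∈ s) :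
    ∃ g' : Gen s n, g'.map Subtype.val = g := by
  cases g with
  | unit ν => lift ν to Fin n → s using hg; exact ⟨unit ν, rfl⟩
  | x a ν => lift ν to Fin n → s using hg; exact ⟨x a ν, rfl⟩
  | tau i h ν => lift ν to Fin n → s using hg; exact ⟨tau i h ν, rfl⟩

end Gen

section restrict

variable (Q : I → I → MvPolynomial (Fin 2) k) {I' : Set I}

lemma restrict_mk (p : FA k I n) : restrict Q I' (mk Q p) = restrictFree Q I' p :=
  RingQuot.liftAlgHom_mkAlgHom_apply k _ _ p

lemma restrict_mk_ι_map_val (g : Gen I' n) :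
    restrict Q I' (mk Q (FreeAlgebra.ι k (g.map Subtype.val))) = mk _ (FreeAlgebra.ι k g) := by
  rw [restrict_mk]
  cases g
  exacts [restrictFree_E_val Q _, restrictFree_Xg_val Q _ _, restrictFree_Tg_val Q _ _ _]

lemma restrict_mk_ι_of_not_mem {g : Gen I n} (hg : ¬ ∀ b, g.source b ∈ I') :
    restrict Q I' (mk Q (FreeAlgebra.ι k g)) = 0 := by
  rw [restrict_mk]
  cases g
  exacts [restrictFree_E_of_not_mem Q hg, restrictFree_Xg_of_not_mem Q _ hg,
    restrictFree_Tg_of_not_mem Q _ _ hg]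

end restrict

section block

variable (Q : I → I → MvPolynomial (Fin 2) k)

lemma mk_E_mul_self (ν : Fin n → I) : mk Q (E k ν) * mk Q (E k ν) = mk Q (E k ν) := by
  rw [← map_mul, mk_rel Q (Rel.unit_mul_self ν)]

lemma mk_E_mul_mk_E_of_ne {ν μ : Fin n → I} (h : ν ≠ μ) :
    mk Q (E k ν) * mk Q (E k μ) = 0 := by
  rw [← map_mul, mk_rel Q (Rel.unit_mul_ne ν μ h), map_zero]

lemma mk_ι_eq_E_mul_mul_E (g : Gen I n) :
    mk Q (FreeAlgebra.ι k g) =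
      mk Q (E k g.target) * mk Q (FreeAlgebra.ι k g) * mk Q (E k g.source) := by
  cases g with
  | unit ν =>
    show mk Q (E k ν) = mk Q (E k ν) * mk Q (E k ν) * mk Q (E k ν)
    rw [mk_E_mul_self, mk_E_mul_self]
  | x a ν => rw [← map_mul, ← map_mul]; exact mk_rel Q (Rel.x_sandwich a ν)
  | tau i h ν => rw [← map_mul, ← map_mul]; exact mk_rel Q (Rel.tau_sandwich i h ν)

theorem HQ.induction {p : HQ k I n Q → Prop}
    (gen : ∀ g : Gen I n, p (mk Q (FreeAlgebra.ι k g)))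
    (algebraMap : ∀ r : k, p (algebraMap k _ r))
    (add : ∀ x y, p x → p y → p (x + y)) (mul : ∀ x y, p x → p y → p (x * y))
    (x : HQ k I n Q) : p x := by
  obtain ⟨x, rfl⟩ := RingQuot.mkAlgHom_surjective k (Rel Q) x
  induction x using FreeAlgebra.induction with
  | grade0 r => simpa [mk] using algebraMap r
  | grade1 g => exact gen g
  | mul a b ha hb => simpa [mk] using mul _ _ ha hb
  | add a b ha hb => simpa [mk] using add _ _ ha hb

end block


section block

variable (Q : I → I → MvPolynomial (Fin 2) k) (I' : Set I)

def idempotentSpan : Ideal (HQ k I n Q) :=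
  Ideal.span {x | ∃ ν : Fin n → I, (∀ b, ν b ∈ I') ∧ mk Q (E k ν) = x}

variable {Q I'}

lemma mk_E_mem_idempotentSpan {ν : Fin n → I} (hν : ∀ b, ν b ∈ I') :
    mk Q (E k ν) ∈ idempotentSpan Q I' :=
  Ideal.subset_span ⟨ν, hν, rfl⟩

lemma mk_E_mul_mk_ι_mem_idempotentSpan {ν : Fin n → I} (hν : ∀ b, ν b ∈ I') (g : Gen I n) :
    mk Q (E k ν) * mk Q (FreeAlgebra.ι k g) ∈ idempotentSpan Q I' := by
  rw [mk_ι_eq_E_mul_mul_E, ← mul_assoc, ← mul_assoc]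
  by_cases h : ν = g.target
  · subst h
    exact Ideal.mul_mem_left _ _ (mk_E_mem_idempotentSpan ((g.forall_target_mem_iff I').mp hν))
  · rw [mk_E_mul_mk_E_of_ne Q h, zero_mul, zero_mul]
    exact zero_mem _

instance : (idempotentSpan (n := n) Q I').IsTwoSided where
  mul_mem_of_left := by
    intro x y hx
    induction y using HQ.induction Q generalizing x with
    | gen g =>
      induction hx using Submodule.span_induction with
      | mem z hz =>
        obtain ⟨ν, hν, rfl⟩ := hz
        exact mk_E_mul_mk_ι_mem_idempotentSpan hν g
      | zero => rw [zero_mul]; exact zero_mem _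
      | add y z _ _ hy hz => rw [add_mul]; exact add_mem hy hz
      | smul a z _ hz => rw [smul_eq_mul, mul_assoc]; exact Ideal.mul_mem_left _ a hz
    | algebraMap r => rw [← Algebra.commutes]; exact Ideal.mul_mem_left _ _ hx
    | add y z hy hz => rw [mul_add]; exact add_mem (hy hx) (hz hx)
    | mul y z hy hz => rw [← mul_assoc]; exact hz (hy hx)

lemma mul_mk_E_eq_zero_of_mem_idempotentSpan {x : HQ k I n Q} (hx : x ∈ idempotentSpan Q I')
    {μ : Fin n → I} (hμ : ¬ ∀ b, μ b ∈ I') : x * mk Q (E k μ) = 0 := by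
  induction hx using Submodule.span_induction with
  | mem z hz =>
    obtain ⟨ν, hν, rfl⟩ := hz
    exact mk_E_mul_mk_E_of_ne Q fun h => hμ (h ▸ hν)
  | zero => rw [zero_mul]
  | add y z _ _ hy hz => rw [add_mul, hy, hz, add_zero]
  | smul a z _ hz => rw [smul_eq_mul, mul_assoc, hz, mul_zero]

lemma mk_E_mul_mul_mk_E_eq_zero {ν μ : Fin n → I} (hν : ∀ b, ν b ∈ I') (hμ : ¬ ∀ b, μ b ∈ I')
    (x : HQ k I n Q) : mk Q (E k ν) * x * mk Q (E k μ) = 0 :=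
  mul_mk_E_eq_zero_of_mem_idempotentSpan
    (Ideal.mul_mem_right x _ (mk_E_mem_idempotentSpan hν)) hμ

theorem mk_E_mul_map (φ : HQ k I n Q →ₐ[k] HQ k I n Q)
    (map_of_mem : ∀ g : Gen I n, (∀ b, g.source b ∈ I') →
      φ (mk Q (FreeAlgebra.ι k g)) = mk Q (FreeAlgebra.ι k g))
    (map_of_not_mem : ∀ g : Gen I n, ¬ (∀ b, g.source b ∈ I') →
      φ (mk Q (FreeAlgebra.ι k g)) = 0)
    {ν : Fin n → I} (hν : ∀ b, ν b ∈ I') (x : HQ k I n Q) :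
    mk Q (E k ν) * φ x = mk Q (E k ν) * x := by
  suffices h : ∀ a, mk Q (E k ν) * a * (x - φ x) = 0 by
    have h1 := h 1
    rwa [mul_one, mul_sub, sub_eq_zero, eq_comm] at h1
  induction x using HQ.induction Q with
  | gen g =>
    intro a
    by_cases hg : ∀ b, g.source b ∈ I'
    · rw [map_of_mem g hg, sub_self, mul_zero]
    · have htarget : mk Q (E k ν) * a * mk Q (E k g.target) = 0 :=
        mk_E_mul_mul_mk_E_eq_zero hν (mt (g.forall_target_mem_iff I').mp hg) a
      rw [map_of_not_mem g hg, sub_zero, mk_ι_eq_E_mul_mul_E]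
      simp only [← mul_assoc, htarget, zero_mul]
  | algebraMap r => simp
  | add x y hx hy =>
    intro a
    rw [map_add, add_sub_add_comm, mul_add, hx, hy, add_zero]
  | mul x y hx hy =>
    intro a
    have hsplit : x * y - φ (x * y) = x * (y - φ y) + (x - φ x) * φ y := by
      rw [map_mul, mul_sub, sub_mul]; abel
    rw [hsplit, mul_add, ← mul_assoc, ← mul_assoc, mul_assoc _ a x, hy, hx, zero_mul, add_zero]

end block

end Rouq

open Rouq in
theorem statement2_general (k : Type) [CommRing k] (I : Type) (n : ℕ)
    (Q : I → I → MvPolynomial (Fin 2) k) (I' : Set I)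
    (f : HQ k ↥I' n (fun i j => Q i j) →ₐ[k] HQ k I n Q)
    (hf_unit : ∀ ν : Fin n → ↥I',
      f (mk (fun i j : ↥I' => Q i j) (E k ν)) = mk Q (E k fun b => (ν b : I)))
    (hf_x : ∀ (a : Fin n) (ν : Fin n → ↥I'),
      f (mk (fun i j : ↥I' => Q i j) (Xg k a ν)) = mk Q (Xg k a fun b => (ν b : I)))
    (hf_tau : ∀ (i : ℕ) (h : i + 1 < n) (ν : Fin n → ↥I'),
      f (mk (fun i j : ↥I' => Q i j) (Tg k i h ν)) = mk Q (Tg k i h fun b => (ν b : I))) :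
    Function.Injective f ∧
    ∀ ν ν' : Fin n → ↥I',
      f '' (Set.range fun a : HQ k ↥I' n (fun i j => Q i j) =>
          mk (fun i j : ↥I' => Q i j) (E k ν) * a * mk (fun i j : ↥I' => Q i j) (E k ν'))
        = Set.range fun a : HQ k I n Q =>
            mk Q (E k fun b => (ν b : I)) * a * mk Q (E k fun b => (ν' b : I)) := by
  have hf_gen : ∀ g : Gen I' n,
      f (mk _ (FreeAlgebra.ι k g)) = mk Q (FreeAlgebra.ι k (g.map Subtype.val)) := by
    rintro (ν | ⟨a, ν⟩ | ⟨i, h, ν⟩)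
    exacts [hf_unit ν, hf_x a ν, hf_tau i h ν]
  have hleft : Function.LeftInverse (restrict Q I') f := by
    suffices (restrict Q I').comp f = AlgHom.id k _ from AlgHom.congr_fun this
    refine RingQuot.ringQuot_ext' k _ _ (FreeAlgebra.hom_ext (funext fun g => ?_))
    exact (congrArg _ (hf_gen g)).trans (restrict_mk_ι_map_val Q g)
  have hsandwich : ∀ (ν : Fin n → I') a, mk Q (E k fun b => (ν b : I)) * f (restrict Q I' a) =
      mk Q (E k fun b => (ν b : I)) * a := by
    intro ν
    refine mk_E_mul_map (f.comp (restrict Q I')) (fun g hg => ?_) (fun g hg => ?_) fun b => (ν b).2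
    · obtain ⟨g, rfl⟩ := g.exists_map_val hg
      simp [restrict_mk_ι_map_val, hf_gen]
    · simp [restrict_mk_ι_of_not_mem Q hg]
  refine ⟨hleft.injective, fun ν ν' => Set.ext fun y => ⟨?_, ?_⟩⟩
  · rintro ⟨_, ⟨a, rfl⟩, rfl⟩
    exact ⟨f a, by simp [hf_unit]⟩
  · rintro ⟨a, rfl⟩
    exact ⟨_, ⟨restrict Q I' a, rfl⟩, by simp [hf_unit, hsandwich]⟩

open Rouq in
/-- For `Q` hermitian and `I' ⊆ I`, the canonical homomorphism
`H_n(Q') → H_n(Q)` (sending each generator to the generator of the same name)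
is injective, and it restricts to a bijection
`1_ν H_n(Q') 1_{ν'} → 1_ν H_n(Q) 1_{ν'}` for all `ν, ν' ∈ (I')^n`. -/
theorem statement2 (k : Type) [CommRing k] (I : Type) (n : ℕ) (hn : 1 ≤ n)
    (Q : I → I → MvPolynomial (Fin 2) k) (hQdiag : ∀ i, Q i i = 0)
    (hherm : Hermitian Q) (I' : Set I)
    (f : HQ k ↥I' n (fun i j => Q i j) →ₐ[k] HQ k I n Q)
    (hf_unit : ∀ ν : Fin n → ↥I',
      f (mk (fun i j : ↥I' => Q i j) (E k ν)) = mk Q (E k fun b => (ν b : I)))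
    (hf_x : ∀ (a : Fin n) (ν : Fin n → ↥I'),
      f (mk (fun i j : ↥I' => Q i j) (Xg k a ν)) = mk Q (Xg k a fun b => (ν b : I)))
    (hf_tau : ∀ (i : ℕ) (h : i + 1 < n) (ν : Fin n → ↥I'),
      f (mk (fun i j : ↥I' => Q i j) (Tg k i h ν)) = mk Q (Tg k i h fun b => (ν b : I))) :
    Function.Injective f ∧
    ∀ ν ν' : Fin n → ↥I',
      f '' (Set.range fun a : HQ k ↥I' n (fun i j => Q i j) =>
          mk (fun i j : ↥I' => Q i j) (E k ν) * a * mk (fun i j : ↥I' => Q i j) (E k ν'))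
        = Set.range fun a : HQ k I n Q =>
            mk Q (E k fun b => (ν b : I)) * a * mk Q (E k fun b => (ν' b : I)) :=
  statement2_general k I n Q I' f hf_unit hf_x hf_tau
end

section
/- Let C be a ring, B a C-algebra and A a B-algebra (so A is also a C-algebra via the composite C → B → A). Assume A is a finitely generated projective left B-module and B is a finitely generated projective left C-module. If t : A → B is a Frobenius form for A over B and t' : B → C is a Frobenius form for B over C, then the composite t'∘t : A → C is a Frobenius form for A over C; in particular A is a finitely generated projective left C-module and the map A → Hom_C(A,C), a ↦ (a' ↦ t'(t(a'a))), is bijective. -/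
namespace Frob

variable {A B C : Type} [Ring A] [Ring B] [Ring C]

/-- `g : A → B` is a homomorphism of left `B`-modules, where `A` is a
`B`-algebra via `ψ`. -/
def IsLeftLinear (ψ : B →+* A) (g : A → B) : Prop :=
  (∀ x y : A, g (x + y) = g x + g y) ∧ ∀ (b : B) (x : A), g (ψ b * x) = b * g x

/-- `t : A → B` is a homomorphism of `(B,B)`-bimodules. -/
def IsBimodMap (ψ : B →+* A) (t : A → B) : Prop :=
  (∀ x y : A, t (x + y) = t x + t y) ∧
    (∀ (b : B) (x : A), t (ψ b * x) = b * t x) ∧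
    (∀ (b : B) (x : A), t (x * ψ b) = t x * b)

/-- `A` is a finitely generated projective left `B`-module (dual basis
formulation). -/
def IsFGProj (ψ : B →+* A) : Prop :=
  ∃ (m : ℕ) (x : Fin m → A) (y : Fin m → A → B),
    (∀ j, IsLeftLinear ψ (y j)) ∧ ∀ a : A, a = ∑ j, ψ (y j a) * x j

/-- `t : A → B` is a Frobenius form: a `(B,B)`-bimodule map such that `A` is a
finitely generated projective left `B`-module and
`\hat t : A → Hom_B(A,B), a ↦ (a' ↦ t(a'a))` is bijective. -/
def IsFrobeniusForm (ψ : B →+* A) (t : A → B) : Prop :=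
  IsBimodMap ψ t ∧ IsFGProj ψ ∧
    (∀ a : A, (∀ a' : A, t (a' * a) = 0) → a = 0) ∧
    (∀ g : A → B, IsLeftLinear ψ g → ∃ a : A, ∀ a' : A, g a' = t (a' * a))

end Frob

/-!
Everything is checked on the dual-basis / representing-element level. Dual bases
`(xᵢ, yᵢ)` of `A` over `B` and `(x'ₖ, y'ₖ)` of `B` over `C` multiply to the dual basis
`(x'ₖ xᵢ, y'ₖ ∘ yᵢ)` of `A` over `C`. For surjectivity, a `C`-linear `g : A → C` gives, for
each `a'`, the `C`-linear map `b ↦ g (b a')` on `B`, represented under `t'` by some `β a'`;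
nondegeneracy of `t'` makes `β` left `B`-linear, so `β` is represented under `t` by some `a`,
and then `g a' = t' (β a') = t' (t (a' a))`.
-/

namespace Frob

variable {A B C : Type} [Ring A] [Ring B] [Ring C] {φ : C →+* B} {ψ : B →+* A}

theorem IsLeftLinear.map_sub {g : A → B} (hg : IsLeftLinear ψ g) (x y : A) :
    g (x - y) = g x - g y :=
  (AddMonoidHom.mk' g hg.1).map_sub x y

theorem IsLeftLinear.comp {y : A → B} {y' : B → C} (hy : IsLeftLinear ψ y)
    (hy' : IsLeftLinear φ y') : IsLeftLinear (ψ.comp φ) (y' ∘ y) :=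
  ⟨fun a₁ a₂ => by simp only [Function.comp_apply, hy.1, hy'.1],
    fun c a => by simp only [Function.comp_apply, RingHom.comp_apply, hy.2, hy'.2]⟩

theorem IsLeftLinear.comp_mul_right {g : A → C} (hg : IsLeftLinear (ψ.comp φ) g) (a : A) :
    IsLeftLinear φ fun b => g (ψ b * a) :=
  ⟨fun b₁ b₂ => by simp only [map_add, add_mul, hg.1],
    fun c b => by dsimp only; rw [map_mul, mul_assoc, ← RingHom.comp_apply, hg.2]⟩

theorem IsBimodMap.isLeftLinear {t : A → B} (ht : IsBimodMap ψ t) : IsLeftLinear ψ t :=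
  ⟨ht.1, ht.2.1⟩

theorem IsBimodMap.comp {t : A → B} {t' : B → C} (ht : IsBimodMap ψ t)
    (ht' : IsBimodMap φ t') : IsBimodMap (ψ.comp φ) (t' ∘ t) :=
  have hlin := ht.isLeftLinear.comp ht'.isLeftLinear
  ⟨hlin.1, hlin.2,
    fun c a => by simp only [Function.comp_apply, RingHom.comp_apply, ht.2.2, ht'.2.2]⟩

theorem IsFGProj.comp (hψ : IsFGProj ψ) (hφ : IsFGProj φ) : IsFGProj (ψ.comp φ) := by
  obtain ⟨m, x, y, hy, hx⟩ := hψ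
  obtain ⟨n, x', y', hy', hx'⟩ := hφ
  let e : Fin (m * n) ≃ Fin m × Fin n := finProdFinEquiv.symm
  refine ⟨m * n, fun j => ψ (x' (e j).2) * x (e j).1, fun j => y' (e j).2 ∘ y (e j).1,
    fun j => (hy _).comp (hy' _), fun a => ?_⟩
  rw [e.sum_comp fun p => ψ.comp φ ((y' p.2 ∘ y p.1) a) * (ψ (x' p.2) * x p.1),
    Fintype.sum_prod_type]
  conv_lhs => rw [hx a]
  refine Finset.sum_congr rfl fun i _ => ?_
  conv_lhs => rw [hx' (y i a)]
  simp only [map_sum, Finset.sum_mul, Function.comp_apply, RingHom.comp_apply, map_mul,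
    mul_assoc]

variable {t : A → B} {t' : B → C}

theorem IsFrobeniusForm.eq_of_forall_mul_eq (ht : IsFrobeniusForm ψ t) {x y : A}
    (h : ∀ a, t (a * x) = t (a * y)) : x = y :=
  sub_eq_zero.mp <| ht.2.2.1 _ fun a => by rw [mul_sub, ht.1.isLeftLinear.map_sub, h, sub_self]

theorem IsFrobeniusForm.comp_eq_zero_of_forall (ht : IsFrobeniusForm ψ t) (ht' : IsFrobeniusForm φ t')
    (a : A) (ha : ∀ a', t' (t (a' * a)) = 0) : a = 0 :=
  ht.2.2.1 a fun a' => ht'.2.2.1 _ fun b => by rw [← ht.1.2.1, ← mul_assoc]; exact ha _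

theorem IsFrobeniusForm.comp_exists_forall_eq (ht : IsFrobeniusForm ψ t)
    (ht' : IsFrobeniusForm φ t') {g : A → C} (hg : IsLeftLinear (ψ.comp φ) g) :
    ∃ a, ∀ a', g a' = t' (t (a' * a)) := by
  choose β hβ using fun a' => ht'.2.2.2 _ (hg.comp_mul_right a')
  have hβ_lin : IsLeftLinear ψ β := by
    refine ⟨fun a₁ a₂ => ht'.eq_of_forall_mul_eq fun b => ?_,
      fun b₀ a' => ht'.eq_of_forall_mul_eq fun b => ?_⟩
    · rw [← hβ, mul_add, hg.1, hβ, hβ, mul_add, ht'.1.1]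
    · rw [← hβ, ← mul_assoc, ← map_mul, hβ, mul_assoc]
  obtain ⟨a, ha⟩ := ht.2.2.2 β hβ_lin
  refine ⟨a, fun a' => ?_⟩
  simpa only [map_one, one_mul, ha] using hβ a' 1

theorem IsFrobeniusForm.comp (ht : IsFrobeniusForm ψ t) (ht' : IsFrobeniusForm φ t') :
    IsFrobeniusForm (ψ.comp φ) (t' ∘ t) :=
  ⟨ht.1.comp ht'.1, ht.2.1.comp ht'.2.1, ht.comp_eq_zero_of_forall ht',
    fun _ hg => ht.comp_exists_forall_eq ht' hg⟩

end Frob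

open Frob in
theorem statement14_general {A B C : Type} [Ring A] [Ring B] [Ring C]
    (φ : C →+* B) (ψ : B →+* A)
    (t : A → B) (ht : IsFrobeniusForm ψ t)
    (t' : B → C) (ht' : IsFrobeniusForm φ t') :
    IsFrobeniusForm (ψ.comp φ) (t' ∘ t) :=
  ht.comp ht'

open Frob in
/-- If `t : A → B` and `t' : B → C` are Frobenius forms then
`t' ∘ t : A → C` is a Frobenius form (in particular `A` is a finitely
generated projective left `C`-module and the associated map
`A → Hom_C(A,C)` is bijective). -/
theorem statement14 {A B C : Type} [Ring A] [Ring B] [Ring C]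
    (φ : C →+* B) (ψ : B →+* A)
    (hAB : IsFGProj ψ) (hBC : IsFGProj φ)
    (t : A → B) (ht : IsFrobeniusForm ψ t)
    (t' : B → C) (ht' : IsFrobeniusForm φ t') :
    IsFrobeniusForm (ψ.comp φ) (t' ∘ t) :=
  statement14_general φ ψ t ht t' ht'
end
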